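/- arXiv:math/9511215 — 4 statements merged into one kernel-verified Lean document; each statement's English description precedes it below -/
import Mathlib

section
/- Let V = ℝ^{p,q} be a pseudo-Euclidean vector space, S a module over the Clifford algebra Cl(V) with trivial extension of the so(V)-action to the Poincaré algebra p(V) = so(V) ⋉ V (V acting trivially on S), and let π : Sym²S → V be an so(V)-equivariant linear map. Then the bracket on g = (so(V) ⋉ V) ⊕ S defined by [A,w] = A·w for A ∈ so(V), {w₁,w₂} = π(w₁ ∨ w₂), and [v,w] = 0 for v ∈ V, w ∈ S, satisfies the graded Jacobi identity, making g a Lie superalgebra. -/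
/-!
STATEMENT 0: Let `L = so(V)` be a Lie algebra acting on modules `V` and `S`
(the action of the translation part `V` of the Poincaré algebra
`p(V) = so(V) ⋉ V` on `S` is trivial), and let `π : Sym²S → V` be an
`so(V)`-equivariant symmetric bilinear map.  The bracket on
`g = (so(V) ⋉ V) ⊕ S` given by `[A,w] = A·w`, `{w₁,w₂} = π(w₁ ∨ w₂)` and
`[v,w] = 0` for `v ∈ V`, `w ∈ S` satisfies the graded Jacobi identity,
making `g` a Lie superalgebra.

We spell out the even part `g₀ = L × V` with the semidirect bracket, the
action of `g₀` on the odd part `S` (with `V` acting trivially), and the odd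
bracket `c s t = (0, π s t)`, and state all four homogeneous components of
the graded Jacobi identity.
-/

theorem extended_poincare_superalgebra_jacobi
    (L V S : Type*) [LieRing L] [LieAlgebra ℝ L]
    [AddCommGroup V] [Module ℝ V] [LieRingModule L V] [LieModule ℝ L V]
    [AddCommGroup S] [Module ℝ S] [LieRingModule L S] [LieModule ℝ L S]
    (π : S →ₗ[ℝ] S →ₗ[ℝ] V)
    (hsymm : ∀ s t : S, π s t = π t s)
    (hequiv : ∀ (A : L) (s t : S), ⁅A, π s t⁆ = π ⁅A, s⁆ t + π s ⁅A, t⁆)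
    -- the even bracket on `g₀ = so(V) ⋉ V`
    (b₀ : (L × V) → (L × V) → (L × V))
    (hb₀ : ∀ x y : L × V, b₀ x y = (⁅x.1, y.1⁆, ⁅x.1, y.2⁆ - ⁅y.1, x.2⁆))
    -- the action of `g₀` on the odd part `S`; the vector part acts trivially
    (a : (L × V) → S → S)
    (ha : ∀ (x : L × V) (s : S), a x s = ⁅x.1, s⁆)
    -- the odd-odd (super) bracket with values in `V ⊆ g₀`
    (c : S → S → (L × V))
    (hc : ∀ s t : S, c s t = (0, π s t)) :
    -- graded Jacobi identities:
    -- even-even-even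
    (∀ x y z : L × V, b₀ (b₀ x y) z = b₀ x (b₀ y z) - b₀ y (b₀ x z)) ∧
    -- even-even-odd
    (∀ (x y : L × V) (s : S), a (b₀ x y) s = a x (a y s) - a y (a x s)) ∧
    -- even-odd-odd
    (∀ (x : L × V) (s t : S), b₀ x (c s t) = c (a x s) t + c s (a x t)) ∧
    -- odd-odd-odd (cyclic sum)
    (∀ s t u : S, a (c s t) u + a (c t u) s + a (c u s) t = 0) := by
  refine ⟨?_, ?_, ?_, ?_⟩
  · intro x y z
    simp only [hb₀, Prod.mk_sub_mk, Prod.mk.injEq]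
    constructor
    · rw [lie_lie]
    · simp only [lie_sub, lie_lie]; abel
  · intro x y s
    simp [ha, hb₀, lie_lie]
  · intro x s t
    simp [hb₀, hc, ha, hequiv, Prod.ext_iff]
  · intro s t u
    simp [ha, hc]
end

section
/- With S = ΛU the exterior-algebra model of the Cl_{m,m} spinor module (ρ(u) = u∧·, ρ(u*) = −u*⌟·), fix a volume form vol ∈ ΛᵐU and define the bilinear form f on S by f(ΛⁱU, ΛʲU) = 0 for i+j ≠ m, and f(s,t)·vol = ε_i · s ∧ t for s ∈ ΛⁱU, t ∈ Λ^{m−i}U, where ε_i = (−1)^{i(i+1)/2}. Then Clifford multiplication ρ(v) is f-skew-symmetric for every v ∈ V = U ⊕ U*, i.e., f(ρ(v)s, t) + f(s, ρ(v)t) = 0. -/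
/-!
Both `ρ(u) = u ∧ ·` and `ρ(d) = -(d ⌟ ·)` shift the degree by `±1`, so for homogeneous `s, t`
the sum `f(ρ(v)s, t) + f(s, ρ(v)t)` vanishes by degree unless the two pairings are between
complementary degrees; there, multiplying by `vol` turns it into a signed sum of wedge products.
For `u ∧ ·`, moving `u` past `s ∈ ΛⁱU` costs `(-1)^i`, and `ε_{i+1} = (-1)^{i+1} ε_i` makes the two
terms cancel. For the contraction, `s ∧ t` has degree `m + 1` and hence vanishes, so the graded
Leibniz rule `d ⌟ (s ∧ t) = (d ⌟ s) ∧ t + (-1)^i s ∧ (d ⌟ t)` is exactly the needed cancellation.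
Homogeneous elements span `ΛU`, so the identity extends to all of `S`.
-/

open CliffordAlgebra (contractLeft contractLeft_ι_mul contractLeft_algebraMap
  contractLeft_algebraMap_mul)

namespace ExteriorAlgebra

variable {R M : Type*} [CommRing R] [AddCommGroup M] [Module R M]

theorem mul_ι_of_mem_exteriorPower (u : M) {i : ℕ} {s : ExteriorAlgebra R M}
    (hs : s ∈ ⋀[R]^i M) : s * ι R u = (-1 : R) ^ i • (ι R u * s) := by
  induction hs using Submodule.pow_induction_on_left' with
  | algebraMap r => simp [Algebra.commutes]
  | add x y n _ _ ihx ihy => simp only [add_mul, mul_add, ihx, ihy, smul_add]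
  | mem_mul w hw n x _ ih =>
    obtain ⟨w, rfl⟩ := hw
    have swap : ι R w * ι R u = -(ι R u * ι R w) := eq_neg_of_add_eq_zero_left (ι_add_mul_swap w u)
    rw [mul_assoc, ih, mul_smul_comm, ← mul_assoc, swap, pow_succ, mul_smul, neg_mul, mul_assoc,
      smul_neg, neg_smul, one_smul, smul_neg]

theorem ι_mul_mem_exteriorPower (u : M) {i : ℕ} {s : ExteriorAlgebra R M}
    (hs : s ∈ ⋀[R]^i M) : ι R u * s ∈ ⋀[R]^(i + 1) M := by
  rw [exteriorPower, pow_succ']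
  exact Submodule.mul_mem_mul (LinearMap.mem_range_self _ u) hs

theorem contractLeft_eq_zero_of_mem_exteriorPower_zero (d : Module.Dual R M)
    {s : ExteriorAlgebra R M} (hs : s ∈ ⋀[R]^0 M) : contractLeft d s = 0 := by
  rw [exteriorPower, pow_zero, Submodule.mem_one] at hs
  obtain ⟨r, rfl⟩ := hs
  exact contractLeft_algebraMap _ d r

theorem contractLeft_mem_exteriorPower (d : Module.Dual R M) {i : ℕ} {s : ExteriorAlgebra R M}
    (hs : s ∈ ⋀[R]^(i + 1) M) : contractLeft d s ∈ ⋀[R]^i M := by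
  rw [exteriorPower, pow_succ'] at hs
  induction hs using Submodule.mul_induction_on' with
  | mem_mul_mem a ha b hb =>
    obtain ⟨w, rfl⟩ := ha
    rw [contractLeft_ι_mul]
    refine sub_mem (Submodule.smul_mem _ _ hb) ?_
    cases i with
    | zero => simp [contractLeft_eq_zero_of_mem_exteriorPower_zero d hb]
    | succ i => exact ι_mul_mem_exteriorPower w (contractLeft_mem_exteriorPower d hb)
  | add x _ y _ hx hy => rw [map_add]; exact add_mem hx hy

theorem contractLeft_mul_of_mem_exteriorPower (d : Module.Dual R M) {i : ℕ}
    {s : ExteriorAlgebra R M} (hs : s ∈ ⋀[R]^i M) (t : ExteriorAlgebra R M) :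
    contractLeft d (s * t) = contractLeft d s * t + (-1 : R) ^ i • (s * contractLeft d t) := by
  induction hs using Submodule.pow_induction_on_left' with
  | algebraMap r => simp [contractLeft_algebraMap, contractLeft_algebraMap_mul]
  | add x y n _ _ ihx ihy =>
    simp only [add_mul, map_add, ihx, ihy, smul_add]
    abel
  | mem_mul w hw n x _ ih =>
    obtain ⟨w, rfl⟩ := hw
    rw [mul_assoc, contractLeft_ι_mul, ih, contractLeft_ι_mul, sub_mul, mul_add, mul_smul_comm,
      smul_mul_assoc, pow_succ, mul_comm _ (-1 : R), mul_smul, neg_one_smul, ← mul_assoc,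
      ← mul_assoc]
    abel

theorem exteriorPower_eq_bot_of_finrank_lt {K V : Type*} [Field K] [AddCommGroup V] [Module K V]
    [FiniteDimensional K V] {n : ℕ} (hn : Module.finrank K V < n) : ⋀[K]^n V = ⊥ := by
  rw [← ιMulti_span_fixedDegree, Submodule.span_eq_bot]
  rintro _ ⟨v, rfl⟩
  refine AlternatingMap.map_linearDependent _ _ fun hv ↦ ?_
  simpa using hv.fintype_card_le_finrank.trans_lt hn

theorem linearMap_ext₂_of_exteriorPower {N : Type*} [AddCommGroup N] [Module R N]
    {B B' : ExteriorAlgebra R M →ₗ[R] ExteriorAlgebra R M →ₗ[R] N}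
    (h : ∀ i j, ∀ s ∈ ⋀[R]^i M, ∀ t ∈ ⋀[R]^j M, B s t = B' s t) : B = B' := by
  refine LinearMap.ext_on_range (ιMulti_span R M) fun x ↦ ?_
  refine LinearMap.ext_on_range (ιMulti_span R M) fun y ↦ ?_
  exact h x.1 y.1 _ (ιMulti_range R x.1 ⟨x.2, rfl⟩) _ (ιMulti_range R y.1 ⟨y.2, rfl⟩)

theorem isSkewAdjoint_of_exteriorPower {N : Type*} [AddCommGroup N] [Module R N]
    (B : ExteriorAlgebra R M →ₗ[R] ExteriorAlgebra R M →ₗ[R] N)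
    (T : Module.End R (ExteriorAlgebra R M))
    (h : ∀ i j, ∀ s ∈ ⋀[R]^i M, ∀ t ∈ ⋀[R]^j M, B (T s) t + B s (T t) = 0) :
    B.IsSkewAdjoint T := by
  have hcomp : B ∘ₗ T = B.compl₂ (-T) := linearMap_ext₂_of_exteriorPower fun i j s hs t ht ↦ by
    simp [eq_neg_of_add_eq_zero_left (h i j s hs t ht)]
  exact fun s t ↦ LinearMap.congr_fun₂ hcomp s t

end ExteriorAlgebra

theorem neg_one_pow_triangle_succ {R : Type*} [Monoid R] [HasDistribNeg R] (i : ℕ) :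
    (-1 : R) ^ ((i + 1) * (i + 1 + 1) / 2) = (-1) ^ (i + 1) * (-1) ^ (i * (i + 1) / 2) := by
  have h : (i + 1) * (i + 1 + 1) / 2 = i * (i + 1) / 2 + (i + 1) := by
    simpa [Nat.mul_comm] using Nat.triangle_succ (i + 1)
  rw [h, pow_add, (Commute.neg_one_left _).pow_pow _ _ |>.eq]

open ExteriorAlgebra

section SignedWedgePairing

variable {K U : Type*} [Field K] [AddCommGroup U] [Module K U]

structure IsSignedWedgePairing (m : ℕ) (vol : ExteriorAlgebra K U)
    (f : LinearMap.BilinForm K (ExteriorAlgebra K U)) : Prop where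
  apply_eq_zero : ∀ i j, i + j ≠ m → ∀ s ∈ ⋀[K]^i U, ∀ t ∈ ⋀[K]^j U, f s t = 0
  apply_smul : ∀ i j, i + j = m → ∀ s ∈ ⋀[K]^i U, ∀ t ∈ ⋀[K]^j U,
    f s t • vol = (-1 : K) ^ (i * (i + 1) / 2) • (s * t)

namespace IsSignedWedgePairing

variable {m : ℕ} {vol : ExteriorAlgebra K U} {f : LinearMap.BilinForm K (ExteriorAlgebra K U)}
  (hf : IsSignedWedgePairing m vol f) (hvol : vol ≠ 0)
include hf hvol

theorem apply_add_apply_eq_zero {i i' j j' : ℕ} {s s' t t' : ExteriorAlgebra K U}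
    (hs : s ∈ ⋀[K]^i U) (hs' : s' ∈ ⋀[K]^i' U) (ht : t ∈ ⋀[K]^j U) (ht' : t' ∈ ⋀[K]^j' U)
    (hdeg : i' + j = i + j')
    (hwedge : i' + j = m →
      (-1 : K) ^ (i' * (i' + 1) / 2) • (s' * t) + (-1 : K) ^ (i * (i + 1) / 2) • (s * t') = 0) :
    f s' t + f s t' = 0 := by
  by_cases h : i' + j = m
  · have hsum : (f s' t + f s t') • vol = 0 := by
      rw [add_smul, hf.apply_smul _ _ h _ hs' _ ht, hf.apply_smul _ _ (hdeg ▸ h) _ hs _ ht']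
      exact hwedge h
    exact (smul_eq_zero.mp hsum).resolve_right hvol
  · rw [hf.apply_eq_zero _ _ h _ hs' _ ht, hf.apply_eq_zero _ _ (hdeg ▸ h) _ hs _ ht', add_zero]

theorem isSkewAdjoint_mulLeft_ι (u : U) : f.IsSkewAdjoint (LinearMap.mulLeft K (ι K u)) := by
  refine isSkewAdjoint_of_exteriorPower f _ fun i j s hs t ht ↦ ?_
  refine hf.apply_add_apply_eq_zero hvol hs (ι_mul_mem_exteriorPower u hs) ht
    (ι_mul_mem_exteriorPower u ht) (by omega) fun _ ↦ ?_
  rw [LinearMap.mulLeft_apply, LinearMap.mulLeft_apply, ← mul_assoc,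
    mul_ι_of_mem_exteriorPower u hs, neg_one_pow_triangle_succ, smul_mul_assoc, pow_succ]
  module

theorem isSkewAdjoint_contractLeft [FiniteDimensional K U] (hm : Module.finrank K U = m)
    (d : Module.Dual K U) : f.IsSkewAdjoint (contractLeft d) := by
  refine isSkewAdjoint_of_exteriorPower f _ fun i j s hs t ht ↦ ?_
  have eq_zero_of_lt : ∀ {k x}, m < k → x ∈ ⋀[K]^k U → x = 0 := fun hk hx ↦ by
    rwa [exteriorPower_eq_bot_of_finrank_lt (hm ▸ hk), Submodule.mem_bot] at hx
  rcases i with _ | i <;> rcases j with _ | j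
  · simp [contractLeft_eq_zero_of_mem_exteriorPower_zero d hs,
      contractLeft_eq_zero_of_mem_exteriorPower_zero d ht]
  · rw [contractLeft_eq_zero_of_mem_exteriorPower_zero d hs, map_zero, LinearMap.zero_apply,
      zero_add]
    obtain rfl | hj := eq_or_ne j m
    · simp [eq_zero_of_lt (lt_add_one j) ht]
    · exact hf.apply_eq_zero 0 j (by omega) _ hs _ (contractLeft_mem_exteriorPower d ht)
  · rw [contractLeft_eq_zero_of_mem_exteriorPower_zero d ht, map_zero, add_zero]
    obtain rfl | hi := eq_or_ne i m
    · simp [eq_zero_of_lt (lt_add_one i) hs]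
    · exact hf.apply_eq_zero i 0 (by omega) _ (contractLeft_mem_exteriorPower d hs) _ ht
  · refine hf.apply_add_apply_eq_zero hvol hs (contractLeft_mem_exteriorPower d hs) ht
      (contractLeft_mem_exteriorPower d ht) (by omega) fun h ↦ ?_
    have hst : s * t = 0 := eq_zero_of_lt (by omega) (SetLike.mul_mem_graded hs ht)
    have leibniz := contractLeft_mul_of_mem_exteriorPower d hs t
    rw [hst, map_zero] at leibniz
    rw [neg_one_pow_triangle_succ, mul_comm ((-1 : K) ^ (i + 1)), mul_smul, ← smul_add, ← leibniz,
      smul_zero]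

end IsSignedWedgePairing

end SignedWedgePairing

theorem exterior_model_form_skew_general
    (U : Type*) [AddCommGroup U] [Module ℝ U] [FiniteDimensional ℝ U]
    (m : ℕ) (hm : Module.finrank ℝ U = m)
    (ρ : Module.Dual ℝ U × U → Module.End ℝ (ExteriorAlgebra ℝ U))
    (hρ : ∀ (v : Module.Dual ℝ U × U) (s : ExteriorAlgebra ℝ U),
      ρ v s = ExteriorAlgebra.ι ℝ v.2 * s -
        CliffordAlgebra.contractLeft (Q := (0 : QuadraticForm ℝ U)) v.1 s)
    (vol : ExteriorAlgebra ℝ U)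
    (hvol0 : vol ≠ 0)
    (f : LinearMap.BilinForm ℝ (ExteriorAlgebra ℝ U))
    (hf0 : ∀ i j : ℕ, i + j ≠ m →
      ∀ s ∈ (LinearMap.range (ExteriorAlgebra.ι ℝ (M := U))) ^ i,
      ∀ t ∈ (LinearMap.range (ExteriorAlgebra.ι ℝ (M := U))) ^ j,
      f s t = 0)
    (hf1 : ∀ i j : ℕ, i + j = m →
      ∀ s ∈ (LinearMap.range (ExteriorAlgebra.ι ℝ (M := U))) ^ i,
      ∀ t ∈ (LinearMap.range (ExteriorAlgebra.ι ℝ (M := U))) ^ j,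
      f s t • vol = ((-1 : ℝ) ^ (i * (i + 1) / 2)) • (s * t)) :
    ∀ (v : Module.Dual ℝ U × U) (s t : ExteriorAlgebra ℝ U),
      f (ρ v s) t + f s (ρ v t) = 0 := by
  intro v s t
  have hf : IsSignedWedgePairing m vol f := ⟨hf0, hf1⟩
  have hρv : ρ v = LinearMap.mulLeft ℝ (ι ℝ v.2) - contractLeft v.1 := LinearMap.ext (hρ v)
  have hι := (LinearMap.mem_skewAdjointSubmodule _).mpr (hf.isSkewAdjoint_mulLeft_ι hvol0 v.2)
  have hd := (LinearMap.mem_skewAdjointSubmodule _).mpr (hf.isSkewAdjoint_contractLeft hvol0 hm v.1)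
  have hskew : f.IsSkewAdjoint (ρ v) := by
    rw [← LinearMap.mem_skewAdjointSubmodule, hρv]
    exact sub_mem hι hd
  rw [hskew s t, Pi.neg_apply, map_neg, neg_add_cancel]

theorem exterior_model_form_skew
    (U : Type*) [AddCommGroup U] [Module ℝ U] [FiniteDimensional ℝ U]
    (m : ℕ) (hm : Module.finrank ℝ U = m)
    (ρ : Module.Dual ℝ U × U → Module.End ℝ (ExteriorAlgebra ℝ U))
    (hρ : ∀ (v : Module.Dual ℝ U × U) (s : ExteriorAlgebra ℝ U),
      ρ v s = ExteriorAlgebra.ι ℝ v.2 * s -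
        CliffordAlgebra.contractLeft (Q := (0 : QuadraticForm ℝ U)) v.1 s)
    (vol : ExteriorAlgebra ℝ U)
    (hvol : vol ∈ (LinearMap.range (ExteriorAlgebra.ι ℝ (M := U))) ^ m)
    (hvol0 : vol ≠ 0)
    (f : LinearMap.BilinForm ℝ (ExteriorAlgebra ℝ U))
    (hf0 : ∀ i j : ℕ, i + j ≠ m →
      ∀ s ∈ (LinearMap.range (ExteriorAlgebra.ι ℝ (M := U))) ^ i,
      ∀ t ∈ (LinearMap.range (ExteriorAlgebra.ι ℝ (M := U))) ^ j,
      f s t = 0)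
    (hf1 : ∀ i j : ℕ, i + j = m →
      ∀ s ∈ (LinearMap.range (ExteriorAlgebra.ι ℝ (M := U))) ^ i,
      ∀ t ∈ (LinearMap.range (ExteriorAlgebra.ι ℝ (M := U))) ^ j,
      f s t • vol = ((-1 : ℝ) ^ (i * (i + 1) / 2)) • (s * t)) :
    ∀ (v : Module.Dual ℝ U × U) (s t : ExteriorAlgebra ℝ U),
      f (ρ v s) t + f s (ρ v t) = 0 :=
  exterior_model_form_skew_general U m hm ρ hρ vol hvol0 f hf0 hf1
end

section
/- Let β₁, β₂ be bilinear forms on modules S₁, S₂ over Cl(V₁), Cl(V₂) respectively, where S₁ = S₁⁰ ⊕ S₁¹ is ℤ₂-graded. Suppose: ρᵢ(vᵢ) is βᵢ-symmetric or βᵢ-skew with sign τ(βᵢ) ∈ {±1} for all vᵢ ∈ Vᵢ, and S₁⁰, S₁¹ are β₁-orthogonal or β₁-isotropic with sign ι(β₁) ∈ {±1} (ι = +1 meaning β₁(S₁⁰,S₁¹)=0, ι = −1 meaning β₁|S₁⁰ = β₁|S₁¹ = 0). If τ(β₂) = ι(β₁)τ(β₁), then for the tensor product form β = β₁ ⊗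 β₂ on the Cl(V₁ ⊕ V₂)-module S₁ ⊗ S₂ (with the graded action), Clifford multiplication by every v ∈ V₁ ⊕ V₂ is β-symmetric or β-skew with common sign τ(β) = τ(β₁). -/
open scoped TensorProduct

/-!
A form determined on pure tensors by `β₁ ⊗ β₂` turns the `β₁`- and `β₂`-types of `f` and `g`
into the `β`-type of `f ⊗ g`, with the product sign. Multiplication by `v₁` is `ρ₁(v₁) ⊗ id`, of
sign `τ(β₁) · 1`; multiplication by `v₂` is `α₁ ⊗ ρ₂(v₂)`, of sign `ι(β₁) τ(β₂) = ι(β₁)² τ(β₁)`,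
which is `τ(β₁)` because `ι(β₁) = ±1`.
-/

namespace LinearMap.BilinForm

variable {R M N : Type*} [CommSemiring R] [AddCommMonoid M] [Module R M]
  [AddCommMonoid N] [Module R N]

theorem map_apply_eq_mul_of_tmul {β₁ : LinearMap.BilinForm R M} {β₂ : LinearMap.BilinForm R N}
    {β : LinearMap.BilinForm R (M ⊗[R] N)}
    (hβ : ∀ (s₁ t₁ : M) (s₂ t₂ : N), β (s₁ ⊗ₜ s₂) (t₁ ⊗ₜ t₂) = β₁ s₁ t₁ * β₂ s₂ t₂)
    {f : Module.End R M} {g : Module.End R N} {a b : R}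
    (hf : ∀ x y, β₁ (f x) y = a * β₁ x (f y)) (hg : ∀ x y, β₂ (g x) y = b * β₂ x (g y))
    (x y : M ⊗[R] N) :
    β (TensorProduct.map f g x) y = (a * b) * β x (TensorProduct.map f g y) := by
  suffices h : β ∘ₗ TensorProduct.map f g = (a * b) • β.compl₂ (TensorProduct.map f g) from
    LinearMap.congr_fun₂ h x y
  ext s₁ s₂ t₁ t₂
  simp only [TensorProduct.AlgebraTensorModule.curry_apply, TensorProduct.curry_apply,
    LinearMap.restrictScalars_apply, LinearMap.comp_apply, compl₂_apply, smul_apply,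
    TensorProduct.map_tmul, hβ, hf, hg, smul_eq_mul]
  ring

end LinearMap.BilinForm

theorem tensor_form_type_general
    (V₁ V₂ S₁ S₂ : Type*)
    [AddCommGroup V₁] [Module ℝ V₁] [AddCommGroup V₂] [Module ℝ V₂]
    [AddCommGroup S₁] [Module ℝ S₁] [AddCommGroup S₂] [Module ℝ S₂]
    (ρ₁ : V₁ →ₗ[ℝ] Module.End ℝ S₁) (ρ₂ : V₂ →ₗ[ℝ] Module.End ℝ S₂)
    (α₁ : Module.End ℝ S₁)
    (β₁ : LinearMap.BilinForm ℝ S₁) (β₂ : LinearMap.BilinForm ℝ S₂)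
    (τ₁ τ₂ ι₁ : ℝ)
    (hι₁pm : ι₁ = 1 ∨ ι₁ = -1)
    -- the types of `β₁` and `β₂`
    (hτ₁ : ∀ (v : V₁) (s t : S₁), β₁ (ρ₁ v s) t = τ₁ * β₁ s (ρ₁ v t))
    (hτ₂ : ∀ (v : V₂) (s t : S₂), β₂ (ρ₂ v s) t = τ₂ * β₂ s (ρ₂ v t))
    -- the isotropy of `β₁`
    (hι₁ : ∀ s t : S₁, β₁ (α₁ s) t = ι₁ * β₁ s (α₁ t))
    -- the compatibility assumption `τ(β₂) = ι(β₁)τ(β₁)`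
    (hcomp : τ₂ = ι₁ * τ₁)
    -- `β = β₁ ⊗ β₂` and the graded Clifford action on `S₁ ⊗ S₂`
    (β : LinearMap.BilinForm ℝ (S₁ ⊗[ℝ] S₂))
    (hβ : ∀ (s₁ t₁ : S₁) (s₂ t₂ : S₂),
      β (s₁ ⊗ₜ s₂) (t₁ ⊗ₜ t₂) = β₁ s₁ t₁ * β₂ s₂ t₂) :
    -- multiplication by `v₁ ∈ V₁` has type `τ(β) = τ(β₁)` …
    (∀ (v : V₁) (s t : S₁ ⊗[ℝ] S₂),
      β (TensorProduct.map (ρ₁ v) LinearMap.id s) t =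
        τ₁ * β s (TensorProduct.map (ρ₁ v) LinearMap.id t)) ∧
    -- … and so does multiplication by `v₂ ∈ V₂`
    (∀ (v : V₂) (s t : S₁ ⊗[ℝ] S₂),
      β (TensorProduct.map α₁ (ρ₂ v) s) t =
        τ₁ * β s (TensorProduct.map α₁ (ρ₂ v) t)) := by
  have hsign : ι₁ * τ₂ = τ₁ := by
    rcases hι₁pm with rfl | rfl <;> rw [hcomp] <;> ring
  refine ⟨fun v s t => ?_, fun v s t => ?_⟩
  · simpa only [mul_one] using LinearMap.BilinForm.map_apply_eq_mul_of_tmul hβ (hτ₁ v)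
      (g := LinearMap.id) (b := 1) (fun x y => (one_mul _).symm) s t
  · simpa only [hsign] using
      LinearMap.BilinForm.map_apply_eq_mul_of_tmul hβ hι₁ (hτ₂ v) s t

theorem tensor_form_type
    (V₁ V₂ S₁ S₂ : Type*)
    [AddCommGroup V₁] [Module ℝ V₁] [AddCommGroup V₂] [Module ℝ V₂]
    [AddCommGroup S₁] [Module ℝ S₁] [AddCommGroup S₂] [Module ℝ S₂]
    (ρ₁ : V₁ →ₗ[ℝ] Module.End ℝ S₁) (ρ₂ : V₂ →ₗ[ℝ] Module.End ℝ S₂)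
    (α₁ : Module.End ℝ S₁) (hα₁ : α₁ ∘ₗ α₁ = LinearMap.id)
    (hodd : ∀ v : V₁, α₁ ∘ₗ ρ₁ v = -(ρ₁ v ∘ₗ α₁))
    (β₁ : LinearMap.BilinForm ℝ S₁) (β₂ : LinearMap.BilinForm ℝ S₂)
    (τ₁ τ₂ ι₁ : ℝ)
    (hτ₁pm : τ₁ = 1 ∨ τ₁ = -1) (hτ₂pm : τ₂ = 1 ∨ τ₂ = -1)
    (hι₁pm : ι₁ = 1 ∨ ι₁ = -1)
    -- the types of `β₁` and `β₂`
    (hτ₁ : ∀ (v : V₁) (s t : S₁), β₁ (ρ₁ v s) t = τ₁ * β₁ s (ρ₁ v t))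
    (hτ₂ : ∀ (v : V₂) (s t : S₂), β₂ (ρ₂ v s) t = τ₂ * β₂ s (ρ₂ v t))
    -- the isotropy of `β₁`
    (hι₁ : ∀ s t : S₁, β₁ (α₁ s) t = ι₁ * β₁ s (α₁ t))
    -- the compatibility assumption `τ(β₂) = ι(β₁)τ(β₁)`
    (hcomp : τ₂ = ι₁ * τ₁)
    -- `β = β₁ ⊗ β₂` and the graded Clifford action on `S₁ ⊗ S₂`
    (β : LinearMap.BilinForm ℝ (S₁ ⊗[ℝ] S₂))
    (hβ : ∀ (s₁ t₁ : S₁) (s₂ t₂ : S₂),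
      β (s₁ ⊗ₜ s₂) (t₁ ⊗ₜ t₂) = β₁ s₁ t₁ * β₂ s₂ t₂) :
    -- multiplication by `v₁ ∈ V₁` has type `τ(β) = τ(β₁)` …
    (∀ (v : V₁) (s t : S₁ ⊗[ℝ] S₂),
      β (TensorProduct.map (ρ₁ v) LinearMap.id s) t =
        τ₁ * β s (TensorProduct.map (ρ₁ v) LinearMap.id t)) ∧
    -- … and so does multiplication by `v₂ ∈ V₂`
    (∀ (v : V₂) (s t : S₁ ⊗[ℝ] S₂),
      β (TensorProduct.map α₁ (ρ₂ v) s) t =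
        τ₁ * β s (TensorProduct.map α₁ (ρ₂ v) t)) :=
  tensor_form_type_general V₁ V₂ S₁ S₂ ρ₁ ρ₂ α₁ β₁ β₂ τ₁ τ₂ ι₁ hι₁pm hτ₁ hτ₂ hι₁ hcomp β hβ
end

section
/- Let m ≡ 1 or 2 (mod 4) and let S = ℂl_m = Cl_m ⊗ ℂ carry the Cl_{2m}-module structure ρ(x)s = xs, ρ(x̃)s = i·α(s)·x for x ∈ ℝᵐ (ℝ^{2m} = ℝᵐ ⊕ ℝ̃ᵐ orthogonal). Then the real bilinear form h = Re⟨c·, ·⟩_ℂ, where ⟨·,·⟩_ℂ is the complex bilinear extension of the standard scalar product on Λℝᵐ ≅ Cl_m and c is complex conjugation, is a symmetric positive-definite form for which both ρ(x) and ρ(x̃) are skew-symmetric for all x ∈ ℝᵐ; hence h is Pin(2m)-invariant. -/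
open scoped RealInnerProductSpace TensorProduct

/-- The quadratic form `x ↦ −⟨x,x⟩` of a Euclidean space, whose Clifford
algebra is `Cl_m` (relation `x² = −|x|²`). -/
noncomputable def negInnerQF (V : Type*) [NormedAddCommGroup V]
    [InnerProductSpace ℝ V] : QuadraticForm ℝ V :=
  -(LinearMap.BilinMap.toQuadraticMap (innerₗ (F := V)))

/-- The ordered monomial `e_{i₁}⋯e_{i_k}` in the Clifford algebra. -/
noncomputable def cliffMonomial {V : Type*} [NormedAddCommGroup V]
    [InnerProductSpace ℝ V] {m : ℕ} (b : Fin m → V) (s : Finset (Fin m)) :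
    CliffordAlgebra (negInnerQF V) :=
  ((s.sort (· ≤ ·)).map fun i => CliffordAlgebra.ι (negInnerQF V) (b i)).prod

/-!
Left and right multiplication by a vector `eᵢ` of the orthonormal basis, and the grading
involution `α`, permute the monomial basis `e_s` of `Cl_m` up to sign, so they are isometries of
the standard scalar product `g`. As `L_{eᵢ}² = R_{eᵢ}² = -1` and `α² = 1`, it follows that `L_x`
and `R_x` are `g`-skew and `α` is `g`-symmetric, so `R_x ∘ α` is `g`-symmetric. These relations
pass to the complex bilinear extension `gC`; complex conjugation commutes with `L_x`, `R_x`, `α`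
and anticommutes with `i`, which makes `ρ(x)` and `ρ(x̃) = i · R_x ∘ α` skew for
`h = Re gC(c·,·)`. Positivity: in the ℂ-basis `1 ⊗ e_t`, `h(s, s) = ∑ₜ |zₜ|²`.
-/

open CliffordAlgebra
open scoped symmDiff

namespace LinearMap.BilinForm

variable {R M ι : Type*} [CommRing R] [AddCommGroup M] [Module R M]
  {B : LinearMap.BilinForm R M}

theorem apply_map_map_eq_of_signed_basis [DecidableEq ι] (e : Module.Basis ι R M)
    (he : ∀ i j, B (e i) (e j) = if i = j then 1 else 0) {T : M →ₗ[R] M} {σ : ι → ι}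
    (hσ : Function.Injective σ) (hT : ∀ i, ∃ ε : R, ε * ε = 1 ∧ T (e i) = ε • e (σ i))
    (x y : M) : B (T x) (T y) = B x y := by
  choose ε hε hTe using hT
  have hB : B.compl₁₂ T T = B := ext_basis e fun i j => by
    rw [compl₁₂_apply, hTe, hTe, smul_left, smul_right, he, he]
    by_cases hij : i = j
    · rw [hij, if_pos rfl, if_pos rfl, mul_one, hε]
    · rw [if_neg (hσ.ne hij), if_neg hij, mul_zero, mul_zero]
  exact congr($hB x y)

theorem apply_map_left_eq_of_signed_basis [DecidableEq ι] (e : Module.Basis ι R M)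
    (he : ∀ i j, B (e i) (e j) = if i = j then 1 else 0) {T : M →ₗ[R] M} {σ : ι → ι}
    (hσ : Function.Injective σ) (hT : ∀ i, ∃ ε : R, ε * ε = 1 ∧ T (e i) = ε • e (σ i))
    {c : R} (hT2 : ∀ x, T (T x) = c • x) (x y : M) : B (T x) y = c * B x (T y) := by
  rw [← apply_map_map_eq_of_signed_basis e he hσ hT (T x) y, hT2, smul_left]

theorem apply_map_left_eq_of_basis {N κ : Type*} [AddCommGroup N] [Module R N]
    (e : Module.Basis κ R N) (L : N →ₗ[R] M →ₗ[R] M) {c : R}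
    (hL : ∀ i x y, B (L (e i) x) y = c * B x (L (e i) y)) (v : N) (x y : M) :
    B (L v x) y = c * B x (L v y) := by
  induction e.mem_span v using Submodule.span_induction with
  | mem v hv => obtain ⟨i, rfl⟩ := hv; exact hL i x y
  | zero => simp
  | add v w _ _ hv hw =>
    rw [map_add, LinearMap.add_apply, LinearMap.add_apply, add_left, map_add, hv, hw, mul_add]
  | smul r v _ hv =>
    rw [map_smul, LinearMap.smul_apply, LinearMap.smul_apply, smul_left, map_smul, hv,
      smul_eq_mul, mul_left_comm]

end LinearMap.BilinForm

section Complexification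

open Complex ComplexConjugate TensorProduct

variable {M : Type*} [AddCommGroup M] [Module ℝ M] {g : LinearMap.BilinForm ℝ M}
  {gC : (ℂ ⊗[ℝ] M) →ₗ[ℂ] (ℂ ⊗[ℝ] M) →ₗ[ℂ] ℂ} {c : (ℂ ⊗[ℝ] M) →ₗ[ℝ] (ℂ ⊗[ℝ] M)}

theorem complexified_apply_map_left_eq
    (hgC : ∀ (z w : ℂ) (φ ψ : M), gC (z ⊗ₜ φ) (w ⊗ₜ ψ) = z * w * g φ ψ)
    {T S : (ℂ ⊗[ℝ] M) →ₗ[ℂ] (ℂ ⊗[ℝ] M)} {T₀ S₀ : M →ₗ[ℝ] M}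
    (hT : ∀ z φ, T (z ⊗ₜ φ) = z ⊗ₜ T₀ φ) (hS : ∀ z φ, S (z ⊗ₜ φ) = z ⊗ₜ S₀ φ)
    (h₀ : ∀ φ ψ, g (T₀ φ) ψ = g φ (S₀ ψ)) (u v : ℂ ⊗[ℝ] M) : gC (T u) v = gC u (S v) := by
  induction u using TensorProduct.induction_on with
  | zero => simp
  | add u u' hu hu' => simp [hu, hu']
  | tmul z φ =>
    induction v using TensorProduct.induction_on with
    | zero => simp
    | add v v' hv hv' => simp [hv, hv']
    | tmul w ψ => rw [hT, hS, hgC, hgC, h₀]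

theorem conj_map_eq_map_conj (hc : ∀ (z : ℂ) (φ : M), c (z ⊗ₜ φ) = conj z ⊗ₜ φ)
    {T : (ℂ ⊗[ℝ] M) →ₗ[ℂ] (ℂ ⊗[ℝ] M)} {T₀ : M →ₗ[ℝ] M}
    (hT : ∀ z φ, T (z ⊗ₜ φ) = z ⊗ₜ T₀ φ) (u : ℂ ⊗[ℝ] M) : c (T u) = T (c u) := by
  induction u using TensorProduct.induction_on with
  | zero => simp
  | add u u' hu hu' => simp [hu, hu']
  | tmul z φ => rw [hT, hc, hc, hT]

theorem conj_smul (hc : ∀ (z : ℂ) (φ : M), c (z ⊗ₜ φ) = conj z ⊗ₜ φ) (z : ℂ)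
    (u : ℂ ⊗[ℝ] M) : c (z • u) = conj z • c u := by
  induction u using TensorProduct.induction_on with
  | zero => simp
  | add u u' hu hu' => simp [hu, hu']
  | tmul w φ => rw [smul_tmul', hc, hc, smul_tmul', smul_eq_mul, smul_eq_mul, map_mul]

theorem apply_conj_eq_conj_apply_conj
    (hgC : ∀ (z w : ℂ) (φ ψ : M), gC (z ⊗ₜ φ) (w ⊗ₜ ψ) = z * w * g φ ψ)
    (hc : ∀ (z : ℂ) (φ : M), c (z ⊗ₜ φ) = conj z ⊗ₜ φ) (hg : ∀ φ ψ, g φ ψ = g ψ φ)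
    (u v : ℂ ⊗[ℝ] M) : gC (c u) v = conj (gC (c v) u) := by
  induction u using TensorProduct.induction_on with
  | zero => simp
  | add u u' hu hu' => simp [hu, hu']
  | tmul z φ =>
    induction v using TensorProduct.induction_on with
    | zero => simp
    | add v v' hv hv' => simp [hv, hv']
    | tmul w ψ =>
      rw [hc, hc, hgC, hgC, hg ψ φ, map_mul, map_mul, conj_conj, conj_ofReal]
      ring

theorem re_apply_conj_self_pos {ι : Type*} [Fintype ι] [DecidableEq ι]
    (e : Module.Basis ι ℝ M) (he : ∀ i j, g (e i) (e j) = if i = j then 1 else 0)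
    (hgC : ∀ (z w : ℂ) (φ ψ : M), gC (z ⊗ₜ φ) (w ⊗ₜ ψ) = z * w * g φ ψ)
    (hc : ∀ (z : ℂ) (φ : M), c (z ⊗ₜ φ) = conj z ⊗ₜ φ) {u : ℂ ⊗[ℝ] M} (hu : u ≠ 0) :
    0 < (gC (c u) u).re := by
  set eC := Algebra.TensorProduct.basis ℂ e
  have hcu : c u = ∑ i, conj (eC.repr u i) • eC i := by
    conv_lhs => rw [← eC.sum_repr u]
    simp [eC, conj_smul hc, Algebra.TensorProduct.basis_apply, hc]
  have hnorm : gC (c u) u = ∑ i, (normSq (eC.repr u i) : ℂ) := by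
    rw [hcu]
    conv_lhs => rw [← eC.sum_repr u]
    simp [eC, Algebra.TensorProduct.basis_apply, hgC, he, apply_ite, normSq_eq_conj_mul_self,
      mul_comm]
  obtain ⟨i, hi⟩ : ∃ i, eC.repr u i ≠ 0 := by
    by_contra! h
    exact hu (eC.forall_coord_eq_zero_iff.1 h)
  rw [hnorm, re_sum]
  simp only [ofReal_re]
  exact Finset.sum_pos' (fun j _ => normSq_nonneg _) ⟨i, Finset.mem_univ i, normSq_pos.2 hi⟩

theorem mulLeft_one_tmul_tmul {A : Type*} [Ring A] [Algebra ℝ A] (a : A) (z : ℂ) (φ : A) :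
    LinearMap.mulLeft ℂ ((1 : ℂ) ⊗ₜ[ℝ] a) (z ⊗ₜ φ) = z ⊗ₜ LinearMap.mulLeft ℝ a φ := by
  simp [Algebra.TensorProduct.tmul_mul_tmul]

theorem mulRight_one_tmul_tmul {A : Type*} [Ring A] [Algebra ℝ A] (a : A) (z : ℂ) (φ : A) :
    LinearMap.mulRight ℂ ((1 : ℂ) ⊗ₜ[ℝ] a) (z ⊗ₜ φ) = z ⊗ₜ LinearMap.mulRight ℝ a φ := by
  simp [Algebra.TensorProduct.tmul_mul_tmul]

end Complexification

section Clifford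

variable {V : Type*} [NormedAddCommGroup V] [InnerProductSpace ℝ V]

theorem negInnerQF_apply (x : V) : negInnerQF V x = -⟪x, x⟫ := by
  simp [negInnerQF, innerₗ_apply_apply]

theorem negInnerQF_isOrtho_of_inner_eq_zero {x y : V} (h : ⟪x, y⟫ = 0) :
    (negInnerQF V).IsOrtho x y := by
  rw [QuadraticMap.isOrtho_def, negInnerQF_apply, negInnerQF_apply, negInnerQF_apply,
    inner_add_add_self, real_inner_comm x y, h]
  ring

section Monomials

variable {m : ℕ} {b : Fin m → V}

theorem ι_mul_ι_self_of_orthonormal (hb : Orthonormal ℝ b) (i : Fin m) :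
    ι (negInnerQF V) (b i) * ι (negInnerQF V) (b i) = -1 := by
  rw [ι_sq_scalar, negInnerQF_apply, real_inner_self_eq_norm_sq, hb.1 i]
  simp

theorem ι_mul_ι_anticomm_of_orthonormal (hb : Orthonormal ℝ b) {i j : Fin m} (hij : i ≠ j) :
    ι (negInnerQF V) (b i) * ι (negInnerQF V) (b j) =
      -(ι (negInnerQF V) (b j) * ι (negInnerQF V) (b i)) :=
  ι_mul_ι_comm_of_isOrtho (negInnerQF_isOrtho_of_inner_eq_zero (hb.2 hij))

theorem cliffMonomial_empty : cliffMonomial b ∅ = 1 := by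
  simp [cliffMonomial]

theorem cliffMonomial_insert_of_lt {i : Fin m} {s : Finset (Fin m)} (h : ∀ j ∈ s, i < j) :
    cliffMonomial b (insert i s) = ι (negInnerQF V) (b i) * cliffMonomial b s := by
  rw [cliffMonomial, Finset.sort_insert _ (fun j hj => (h j hj).le)
    (fun hi => lt_irrefl i (h i hi))]
  rfl

theorem ι_mul_cliffMonomial (hb : Orthonormal ℝ b) (i : Fin m) (s : Finset (Fin m)) :
    ∃ ε : ℝ, ε * ε = 1 ∧
      ι (negInnerQF V) (b i) * cliffMonomial b s = ε • cliffMonomial b (s ∆ {i}) := by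
  induction s using Finset.induction_on_min with
  | empty =>
    refine ⟨1, one_mul 1, ?_⟩
    rw [one_smul, show (∅ : Finset (Fin m)) ∆ {i} = insert i ∅ by simp,
      cliffMonomial_insert_of_lt (by simp)]
  | insert a s ha ih =>
    rcases lt_trichotomy i a with hia | rfl | hai
    · refine ⟨1, one_mul 1, ?_⟩
      have hs : insert a s ∆ {i} = insert i (insert a s) := by
        ext j; simp only [Finset.mem_symmDiff, Finset.mem_insert, Finset.mem_singleton]; grind
      rw [one_smul, hs, cliffMonomial_insert_of_lt (s := insert a s)]
      intro j hj
      rcases Finset.mem_insert.1 hj with rfl | hj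
      exacts [hia, hia.trans (ha j hj)]
    · refine ⟨-1, by norm_num, ?_⟩
      have hs : insert i s ∆ {i} = s := by
        ext j; simp only [Finset.mem_symmDiff, Finset.mem_insert, Finset.mem_singleton]; grind
      rw [cliffMonomial_insert_of_lt ha, ← mul_assoc, ι_mul_ι_self_of_orthonormal hb, hs,
        neg_one_mul, neg_one_smul]
    · obtain ⟨ε, hε, he⟩ := ih
      refine ⟨-ε, by rw [neg_mul_neg, hε], ?_⟩
      have hs : insert a s ∆ {i} = insert a (s ∆ {i}) := by
        ext j; simp only [Finset.mem_symmDiff, Finset.mem_insert, Finset.mem_singleton]; grind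
      have ha' : ∀ j ∈ s ∆ {i}, a < j := by
        intro j hj
        rcases Finset.mem_symmDiff.1 hj with ⟨hj, -⟩ | ⟨hj, -⟩
        exacts [ha j hj, Finset.mem_singleton.1 hj ▸ hai]
      rw [cliffMonomial_insert_of_lt ha, ← mul_assoc,
        ι_mul_ι_anticomm_of_orthonormal hb hai.ne', neg_mul, mul_assoc, he, hs,
        cliffMonomial_insert_of_lt ha', mul_smul_comm, neg_smul]

theorem cliffMonomial_mul_ι_comm (hb : Orthonormal ℝ b) (i : Fin m) (s : Finset (Fin m)) :
    ∃ ε : ℝ, ε * ε = 1 ∧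
      cliffMonomial b s * ι (negInnerQF V) (b i) =
        ε • (ι (negInnerQF V) (b i) * cliffMonomial b s) := by
  induction s using Finset.induction_on_min with
  | empty => exact ⟨1, one_mul 1, by rw [cliffMonomial_empty, one_mul, mul_one, one_smul]⟩
  | insert a s ha ih =>
    obtain ⟨ε, hε, he⟩ := ih
    have hstep : cliffMonomial b (insert a s) * ι (negInnerQF V) (b i) =
        ε • (ι (negInnerQF V) (b a) * ι (negInnerQF V) (b i) * cliffMonomial b s) := by
      rw [cliffMonomial_insert_of_lt ha, mul_assoc, he, mul_smul_comm, mul_assoc]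
    rw [hstep, cliffMonomial_insert_of_lt ha, ← mul_assoc]
    by_cases hia : i = a
    · exact ⟨ε, hε, by rw [hia]⟩
    · refine ⟨-ε, by rw [neg_mul_neg, hε], ?_⟩
      rw [ι_mul_ι_anticomm_of_orthonormal hb (Ne.symm hia), neg_mul, smul_neg, neg_smul]

theorem cliffMonomial_mul_ι (hb : Orthonormal ℝ b) (i : Fin m) (s : Finset (Fin m)) :
    ∃ ε : ℝ, ε * ε = 1 ∧
      cliffMonomial b s * ι (negInnerQF V) (b i) = ε • cliffMonomial b (s ∆ {i}) := by
  obtain ⟨ε, hε, he⟩ := cliffMonomial_mul_ι_comm hb i s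
  obtain ⟨ε', hε', he'⟩ := ι_mul_cliffMonomial hb i s
  exact ⟨ε * ε', by linear_combination ε' * ε' * hε + hε', by rw [he, he', smul_smul]⟩

theorem involute_cliffMonomial (s : Finset (Fin m)) :
    involute (cliffMonomial b s) = ((-1 : ℝ) ^ s.card) • cliffMonomial b s := by
  induction s using Finset.induction_on_min with
  | empty => simp [cliffMonomial_empty]
  | insert a s ha ih =>
    rw [cliffMonomial_insert_of_lt ha, map_mul, involute_ι, ih,
      Finset.card_insert_of_notMem (fun h => lt_irrefl a (ha a h)), pow_succ, mul_smul_comm,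
      neg_mul, mul_neg_one, neg_smul, smul_neg]

theorem linearIndependent_cliffMonomial
    {g : LinearMap.BilinForm ℝ (CliffordAlgebra (negInnerQF V))} (hg : ∀ s t : Finset (Fin m),
      g (cliffMonomial b s) (cliffMonomial b t) = if s = t then 1 else 0) :
    LinearIndependent ℝ (cliffMonomial b) :=
  LinearMap.BilinForm.linearIndependent_of_iIsOrtho (B := g)
    (LinearMap.BilinForm.iIsOrtho_def.2 fun s t hst => by rw [hg, if_neg hst])
    (fun s => by simp [hg])

theorem span_cliffMonomial {b : Module.Basis (Fin m) ℝ V} (hb : Orthonormal ℝ b) :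
    Submodule.span ℝ (Set.range (cliffMonomial b)) = ⊤ := by
  set S := Submodule.span ℝ (Set.range (cliffMonomial b))
  have hbasis (i : Fin m) : ∀ y ∈ S, ι (negInnerQF V) (b i) * y ∈ S := fun y hy => by
    induction hy using Submodule.span_induction with
    | mem y hy =>
      obtain ⟨s, rfl⟩ := hy
      obtain ⟨ε, -, he⟩ := ι_mul_cliffMonomial hb i s
      exact he ▸ S.smul_mem ε (Submodule.subset_span ⟨_, rfl⟩)
    | zero => simp
    | add y z _ _ hy hz => rw [mul_add]; exact S.add_mem hy hz
    | smul r y _ hy => rw [mul_smul_comm]; exact S.smul_mem r hy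
  have hι (v : V) : ∀ y ∈ S, ι (negInnerQF V) v * y ∈ S := fun y hy => by
    induction b.mem_span v using Submodule.span_induction with
    | mem v hv => obtain ⟨i, rfl⟩ := hv; exact hbasis i y hy
    | zero => simp
    | add v w _ _ hv hw => rw [map_add, add_mul]; exact S.add_mem hv hw
    | smul r v _ hv => rw [map_smul, smul_mul_assoc]; exact S.smul_mem r hv
  have hmul (a : CliffordAlgebra (negInnerQF V)) : ∀ y ∈ S, a * y ∈ S := by
    induction a using CliffordAlgebra.induction with
    | algebraMap r => intro y hy; rw [← Algebra.smul_def]; exact S.smul_mem r hy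
    | ι v => exact hι v
    | mul a c ha hc => intro y hy; rw [mul_assoc]; exact ha _ (hc y hy)
    | add a c ha hc => intro y hy; rw [add_mul]; exact S.add_mem (ha y hy) (hc y hy)
  refine eq_top_iff.2 fun a _ => mul_one a ▸ hmul a 1 ?_
  exact cliffMonomial_empty (b := b) ▸ Submodule.subset_span ⟨∅, rfl⟩

end Monomials

section StandardForm

variable {m : ℕ} {b : Module.Basis (Fin m) ℝ V}
  {g : LinearMap.BilinForm ℝ (CliffordAlgebra (negInnerQF V))}

noncomputable def cliffMonomialBasis (hb : Orthonormal ℝ b) (hg : ∀ s t : Finset (Fin m),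
      g (cliffMonomial b s) (cliffMonomial b t) = if s = t then 1 else 0) :
    Module.Basis (Finset (Fin m)) ℝ (CliffordAlgebra (negInnerQF V)) :=
  .mk (linearIndependent_cliffMonomial hg) (span_cliffMonomial hb).ge

theorem coe_cliffMonomialBasis (hb : Orthonormal ℝ b) (hg : ∀ s t : Finset (Fin m),
      g (cliffMonomial b s) (cliffMonomial b t) = if s = t then 1 else 0) :
    ⇑(cliffMonomialBasis hb hg) = cliffMonomial b :=
  Module.Basis.coe_mk _ _

theorem bilinForm_cliffMonomialBasis (hb : Orthonormal ℝ b) (hg : ∀ s t : Finset (Fin m),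
      g (cliffMonomial b s) (cliffMonomial b t) = if s = t then 1 else 0) (s t : Finset (Fin m)) :
    g (cliffMonomialBasis hb hg s) (cliffMonomialBasis hb hg t) = if s = t then 1 else 0 := by
  rw [coe_cliffMonomialBasis, hg]

theorem bilinForm_symm (hb : Orthonormal ℝ b) (hg : ∀ s t : Finset (Fin m),
      g (cliffMonomial b s) (cliffMonomial b t) = if s = t then 1 else 0)
    (φ ψ : CliffordAlgebra (negInnerQF V)) : g φ ψ = g ψ φ := by
  have hflip : g = LinearMap.flip g :=
    LinearMap.BilinForm.ext_basis (cliffMonomialBasis hb hg) fun s t => by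
      rw [LinearMap.flip_apply, bilinForm_cliffMonomialBasis, bilinForm_cliffMonomialBasis]
      exact if_congr eq_comm rfl rfl
  exact congr($hflip φ ψ)

theorem bilinForm_ι_mul_skew (hb : Orthonormal ℝ b) (hg : ∀ s t : Finset (Fin m),
      g (cliffMonomial b s) (cliffMonomial b t) = if s = t then 1 else 0)
    (x : V) (φ ψ : CliffordAlgebra (negInnerQF V)) :
    g (ι (negInnerQF V) x * φ) ψ = -g φ (ι (negInnerQF V) x * ψ) := by
  have hbasis (i : Fin m) (φ ψ : CliffordAlgebra (negInnerQF V)) :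
      g (ι (negInnerQF V) (b i) * φ) ψ = -1 * g φ (ι (negInnerQF V) (b i) * ψ) :=
    LinearMap.BilinForm.apply_map_left_eq_of_signed_basis
      (T := LinearMap.mulLeft ℝ (ι (negInnerQF V) (b i)))
      (cliffMonomialBasis hb hg) (bilinForm_cliffMonomialBasis hb hg)
      (symmDiff_left_injective {i})
      (fun s => by simpa [coe_cliffMonomialBasis] using ι_mul_cliffMonomial hb i s)
      (fun y => by simp [← mul_assoc, ι_mul_ι_self_of_orthonormal hb]) φ ψ
  simpa using LinearMap.BilinForm.apply_map_left_eq_of_basis (B := g) (c := -1) b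
    (LinearMap.mul ℝ _ ∘ₗ ι (negInnerQF V)) (by simpa using hbasis) x φ ψ

theorem bilinForm_mul_ι_skew (hb : Orthonormal ℝ b) (hg : ∀ s t : Finset (Fin m),
      g (cliffMonomial b s) (cliffMonomial b t) = if s = t then 1 else 0)
    (x : V) (φ ψ : CliffordAlgebra (negInnerQF V)) :
    g (φ * ι (negInnerQF V) x) ψ = -g φ (ψ * ι (negInnerQF V) x) := by
  have hbasis (i : Fin m) (φ ψ : CliffordAlgebra (negInnerQF V)) :
      g (φ * ι (negInnerQF V) (b i)) ψ = -1 * g φ (ψ * ι (negInnerQF V) (b i)) :=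
    LinearMap.BilinForm.apply_map_left_eq_of_signed_basis
      (T := LinearMap.mulRight ℝ (ι (negInnerQF V) (b i)))
      (cliffMonomialBasis hb hg) (bilinForm_cliffMonomialBasis hb hg)
      (symmDiff_left_injective {i})
      (fun s => by simpa [coe_cliffMonomialBasis] using cliffMonomial_mul_ι hb i s)
      (fun y => by simp [mul_assoc, ι_mul_ι_self_of_orthonormal hb]) φ ψ
  simpa using LinearMap.BilinForm.apply_map_left_eq_of_basis (B := g) (c := -1) b
    ((LinearMap.mul ℝ _).flip ∘ₗ ι (negInnerQF V)) (by simpa using hbasis) x φ ψ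

theorem bilinForm_involute_symm (hb : Orthonormal ℝ b) (hg : ∀ s t : Finset (Fin m),
      g (cliffMonomial b s) (cliffMonomial b t) = if s = t then 1 else 0)
    (φ ψ : CliffordAlgebra (negInnerQF V)) : g (involute φ) ψ = g φ (involute ψ) := by
  simpa using LinearMap.BilinForm.apply_map_left_eq_of_signed_basis
    (T := involute.toLinearMap) (c := 1)
    (cliffMonomialBasis hb hg) (bilinForm_cliffMonomialBasis hb hg) Function.injective_id
    (fun s => ⟨(-1) ^ s.card, by rw [← mul_pow]; norm_num,
      by simpa [coe_cliffMonomialBasis] using involute_cliffMonomial s⟩)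
    (fun y => by simp) φ ψ

theorem bilinForm_involute_mul_ι_symm (hb : Orthonormal ℝ b) (hg : ∀ s t : Finset (Fin m),
      g (cliffMonomial b s) (cliffMonomial b t) = if s = t then 1 else 0)
    (x : V) (φ ψ : CliffordAlgebra (negInnerQF V)) :
    g (involute φ * ι (negInnerQF V) x) ψ = g φ (involute ψ * ι (negInnerQF V) x) := by
  rw [bilinForm_mul_ι_skew hb hg, bilinForm_involute_symm hb hg, map_mul, involute_ι, mul_neg,
    map_neg, neg_neg]

end StandardForm

section Complexified

open TensorProduct

variable {m : ℕ} {b : Module.Basis (Fin m) ℝ V}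
  {g : LinearMap.BilinForm ℝ (CliffordAlgebra (negInnerQF V))}
  {gC : (ℂ ⊗[ℝ] CliffordAlgebra (negInnerQF V)) →ₗ[ℂ]
    (ℂ ⊗[ℝ] CliffordAlgebra (negInnerQF V)) →ₗ[ℂ] ℂ}

theorem complexified_ι_mul_skew (hb : Orthonormal ℝ b) (hg : ∀ s t : Finset (Fin m),
      g (cliffMonomial b s) (cliffMonomial b t) = if s = t then 1 else 0)
    (hgC : ∀ (z w : ℂ) (φ ψ : CliffordAlgebra (negInnerQF V)),
      gC (z ⊗ₜ φ) (w ⊗ₜ ψ) = z * w * g φ ψ)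
    (x : V) (u v : ℂ ⊗[ℝ] CliffordAlgebra (negInnerQF V)) :
    gC ((1 ⊗ₜ ι (negInnerQF V) x) * u) v = -gC u ((1 ⊗ₜ ι (negInnerQF V) x) * v) := by
  have hneg (z : ℂ) (φ : CliffordAlgebra (negInnerQF V)) :
      (-LinearMap.mulLeft ℂ ((1 : ℂ) ⊗ₜ[ℝ] ι (negInnerQF V) x)) (z ⊗ₜ φ) =
        z ⊗ₜ (-LinearMap.mulLeft ℝ (ι (negInnerQF V) x)) φ := by
    rw [LinearMap.neg_apply, LinearMap.neg_apply, tmul_neg, mulLeft_one_tmul_tmul]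
  simpa using complexified_apply_map_left_eq hgC (mulLeft_one_tmul_tmul _) hneg
    (fun φ ψ => by simp [bilinForm_ι_mul_skew hb hg]) u v

theorem complexified_involute_mul_ι_symm (hb : Orthonormal ℝ b) (hg : ∀ s t : Finset (Fin m),
      g (cliffMonomial b s) (cliffMonomial b t) = if s = t then 1 else 0)
    (hgC : ∀ (z w : ℂ) (φ ψ : CliffordAlgebra (negInnerQF V)),
      gC (z ⊗ₜ φ) (w ⊗ₜ ψ) = z * w * g φ ψ)
    {α : (ℂ ⊗[ℝ] CliffordAlgebra (negInnerQF V)) →ₗ[ℂ]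
      (ℂ ⊗[ℝ] CliffordAlgebra (negInnerQF V))}
    (hα : ∀ (z : ℂ) (φ : CliffordAlgebra (negInnerQF V)), α (z ⊗ₜ φ) = z ⊗ₜ involute φ)
    (x : V) (u v : ℂ ⊗[ℝ] CliffordAlgebra (negInnerQF V)) :
    gC (α u * (1 ⊗ₜ ι (negInnerQF V) x)) v = gC u (α v * (1 ⊗ₜ ι (negInnerQF V) x)) := by
  have hT (z : ℂ) (φ : CliffordAlgebra (negInnerQF V)) :
      (LinearMap.mulRight ℂ (1 ⊗ₜ ι (negInnerQF V) x) ∘ₗ α) (z ⊗ₜ φ) =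
        z ⊗ₜ (LinearMap.mulRight ℝ (ι (negInnerQF V) x) ∘ₗ involute.toLinearMap) φ := by
    rw [LinearMap.comp_apply, LinearMap.comp_apply, hα, mulRight_one_tmul_tmul]
    rfl
  simpa using complexified_apply_map_left_eq hgC hT hT
    (fun φ ψ => bilinForm_involute_mul_ι_symm hb hg x φ ψ) u v

end Complexified

end Clifford

theorem complexified_clifford_invariant_scalar_product_general
    (V : Type*) [NormedAddCommGroup V] [InnerProductSpace ℝ V]
    (m : ℕ)
    (b : Module.Basis (Fin m) ℝ V) (hb : Orthonormal ℝ (⇑b))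
    -- the standard scalar product on `Cl_m ≅ Λℝᵐ`
    (g : LinearMap.BilinForm ℝ (CliffordAlgebra (negInnerQF V)))
    (hg : ∀ s t : Finset (Fin m),
      g (cliffMonomial (⇑b) s) (cliffMonomial (⇑b) t) = if s = t then 1 else 0)
    -- its complex bilinear extension to `S = ℂ ⊗ Cl_m`
    (gC : (ℂ ⊗[ℝ] CliffordAlgebra (negInnerQF V)) →ₗ[ℂ]
      (ℂ ⊗[ℝ] CliffordAlgebra (negInnerQF V)) →ₗ[ℂ] ℂ)
    (hgC : ∀ (z w : ℂ) (φ ψ : CliffordAlgebra (negInnerQF V)),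
      gC (z ⊗ₜ φ) (w ⊗ₜ ψ) = z * w * (g φ ψ : ℂ))
    -- complex conjugation `c` on `S`
    (c : (ℂ ⊗[ℝ] CliffordAlgebra (negInnerQF V)) →ₗ[ℝ]
      (ℂ ⊗[ℝ] CliffordAlgebra (negInnerQF V)))
    (hc : ∀ (z : ℂ) (φ : CliffordAlgebra (negInnerQF V)),
      c (z ⊗ₜ φ) = (starRingEnd ℂ) z ⊗ₜ φ)
    -- the grading involution `α` extended ℂ-linearly
    (α : (ℂ ⊗[ℝ] CliffordAlgebra (negInnerQF V)) →ₗ[ℂ]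
      (ℂ ⊗[ℝ] CliffordAlgebra (negInnerQF V)))
    (hα : ∀ (z : ℂ) (φ : CliffordAlgebra (negInnerQF V)),
      α (z ⊗ₜ φ) = z ⊗ₜ CliffordAlgebra.involute φ)
    -- the real form `h = Re⟨c·,·⟩_ℂ`
    (h : (ℂ ⊗[ℝ] CliffordAlgebra (negInnerQF V)) →
      (ℂ ⊗[ℝ] CliffordAlgebra (negInnerQF V)) → ℝ)
    (hh : ∀ s t, h s t = (gC (c s) t).re) :
    -- `h` is symmetric …
    (∀ s t, h s t = h t s) ∧
    -- … positive definite …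
    (∀ s, s ≠ 0 → 0 < h s s) ∧
    -- … `ρ(x) : s ↦ (1 ⊗ x)·s` is `h`-skew-symmetric …
    (∀ (x : V) (s t),
      h (((1 : ℂ) ⊗ₜ CliffordAlgebra.ι (negInnerQF V) x) * s) t =
        - h s (((1 : ℂ) ⊗ₜ CliffordAlgebra.ι (negInnerQF V) x) * t)) ∧
    -- … and `ρ(x̃) : s ↦ i·α(s)·(1 ⊗ x)` is `h`-skew-symmetric
    (∀ (x : V) (s t),
      h (Complex.I • (α s * ((1 : ℂ) ⊗ₜ CliffordAlgebra.ι (negInnerQF V) x))) t =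
        - h s (Complex.I • (α t * ((1 : ℂ) ⊗ₜ CliffordAlgebra.ι (negInnerQF V) x)))) := by
  refine ⟨fun s t => ?_, fun s hs => ?_, fun x s t => ?_, fun x s t => ?_⟩
  · rw [hh, hh, apply_conj_eq_conj_apply_conj hgC hc (bilinForm_symm hb hg), Complex.conj_re]
  · rw [hh]
    exact re_apply_conj_self_pos _ (bilinForm_cliffMonomialBasis hb hg) hgC hc hs
  · rw [hh, hh, ← LinearMap.mulLeft_apply ℂ, conj_map_eq_map_conj hc (mulLeft_one_tmul_tmul _),
      LinearMap.mulLeft_apply, complexified_ι_mul_skew hb hg hgC, Complex.neg_re]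
  · have hconj :
        c (α s * (1 ⊗ₜ ι (negInnerQF V) x)) = α (c s) * (1 ⊗ₜ ι (negInnerQF V) x) := by
      rw [← LinearMap.mulRight_apply ℂ, conj_map_eq_map_conj hc (mulRight_one_tmul_tmul _),
        conj_map_eq_map_conj hc (T₀ := involute.toLinearMap) hα, LinearMap.mulRight_apply]
    rw [hh, hh, conj_smul hc, hconj, Complex.conj_I, neg_smul, map_neg, map_smul, map_smul,
      LinearMap.neg_apply, LinearMap.smul_apply, complexified_involute_mul_ι_symm hb hg hgC hα,
      smul_eq_mul, Complex.neg_re]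

theorem complexified_clifford_invariant_scalar_product
    (V : Type*) [NormedAddCommGroup V] [InnerProductSpace ℝ V]
    (m : ℕ) (hm : m % 4 = 1 ∨ m % 4 = 2)
    (b : Module.Basis (Fin m) ℝ V) (hb : Orthonormal ℝ (⇑b))
    -- the standard scalar product on `Cl_m ≅ Λℝᵐ`
    (g : LinearMap.BilinForm ℝ (CliffordAlgebra (negInnerQF V)))
    (hgsymm : ∀ φ ψ, g φ ψ = g ψ φ)
    (hg : ∀ s t : Finset (Fin m),
      g (cliffMonomial (⇑b) s) (cliffMonomial (⇑b) t) = if s = t then 1 else 0)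
    -- its complex bilinear extension to `S = ℂ ⊗ Cl_m`
    (gC : (ℂ ⊗[ℝ] CliffordAlgebra (negInnerQF V)) →ₗ[ℂ]
      (ℂ ⊗[ℝ] CliffordAlgebra (negInnerQF V)) →ₗ[ℂ] ℂ)
    (hgC : ∀ (z w : ℂ) (φ ψ : CliffordAlgebra (negInnerQF V)),
      gC (z ⊗ₜ φ) (w ⊗ₜ ψ) = z * w * (g φ ψ : ℂ))
    -- complex conjugation `c` on `S`
    (c : (ℂ ⊗[ℝ] CliffordAlgebra (negInnerQF V)) →ₗ[ℝ]
      (ℂ ⊗[ℝ] CliffordAlgebra (negInnerQF V)))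
    (hc : ∀ (z : ℂ) (φ : CliffordAlgebra (negInnerQF V)),
      c (z ⊗ₜ φ) = (starRingEnd ℂ) z ⊗ₜ φ)
    -- the grading involution `α` extended ℂ-linearly
    (α : (ℂ ⊗[ℝ] CliffordAlgebra (negInnerQF V)) →ₗ[ℂ]
      (ℂ ⊗[ℝ] CliffordAlgebra (negInnerQF V)))
    (hα : ∀ (z : ℂ) (φ : CliffordAlgebra (negInnerQF V)),
      α (z ⊗ₜ φ) = z ⊗ₜ CliffordAlgebra.involute φ)
    -- the real form `h = Re⟨c·,·⟩_ℂ`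
    (h : (ℂ ⊗[ℝ] CliffordAlgebra (negInnerQF V)) →
      (ℂ ⊗[ℝ] CliffordAlgebra (negInnerQF V)) → ℝ)
    (hh : ∀ s t, h s t = (gC (c s) t).re) :
    -- `h` is symmetric …
    (∀ s t, h s t = h t s) ∧
    -- … positive definite …
    (∀ s, s ≠ 0 → 0 < h s s) ∧
    -- … `ρ(x) : s ↦ (1 ⊗ x)·s` is `h`-skew-symmetric …
    (∀ (x : V) (s t),
      h (((1 : ℂ) ⊗ₜ CliffordAlgebra.ι (negInnerQF V) x) * s) t =
        - h s (((1 : ℂ) ⊗ₜ CliffordAlgebra.ι (negInnerQF V) x) * t)) ∧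
    -- … and `ρ(x̃) : s ↦ i·α(s)·(1 ⊗ x)` is `h`-skew-symmetric
    (∀ (x : V) (s t),
      h (Complex.I • (α s * ((1 : ℂ) ⊗ₜ CliffordAlgebra.ι (negInnerQF V) x))) t =
        - h s (Complex.I • (α t * ((1 : ℂ) ⊗ₜ CliffordAlgebra.ι (negInnerQF V) x)))) :=
  complexified_clifford_invariant_scalar_product_general V m b hb g hg gC hgC c hc α hα h hh
end
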